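/- arXiv:1605.07500 — 2 statements merged into one kernel-verified Lean document; each statement's English description precedes it below -/
import Mathlib

section
/- Policy improvement for optimal stopping (Example): let S be an adapted integrable process, Y its Snell envelope given by Y_j = max{S_j, E_j[Y_{j+1}]}, Y_J = S_J, and let (τ_l)_{l=0,...,J} be a consistent family of {0,...,J}-valued stopping times (τ_l ≥ l, and τ_l > l ⟹ τ_l = τ_{l+1}). Fix a window κ ∈ ℕ and define the stopping times τ̄_j = inf{ i ≥ j : S_i ≥ max_{l=i+1,...,min{i+κ,J}} E_i[S_{τ_l}] }. Then for every j = 0,...,J, E_j[S_{τ̄_j}] ≥ max_{l=j,...,min{j+κ,J}} E_j[S_{τ_l}] P-a.s. -/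
open MeasureTheory
open scoped ENNReal

noncomputable section

variable {Ω : Type*} {m0 : MeasurableSpace Ω}

/-- `L^{∞-}`: membership in `L^p` for every finite `p ≥ 1`. -/
def MemLinfMinus {E : Type*} [NormedAddCommGroup E] (μ : Measure Ω) (f : Ω → E) : Prop :=
  ∀ p : ℝ≥0∞, 1 ≤ p → p ≠ ⊤ → MemLp f p μ

/-- Euclidean dot product on `Fin D → ℝ`. -/
def dotp {D : ℕ} (x y : Fin D → ℝ) : ℝ := ∑ d, x d * y d

/-- Componentwise conditional expectation of an `ℝ^D`-valued random vector. -/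
def cexpV (μ : Measure Ω) (m : MeasurableSpace Ω) {D : ℕ} (f : Ω → Fin D → ℝ) :
    Ω → Fin D → ℝ :=
  fun ω d => (μ[fun ω' => f ω' d|m]) ω

/-- The `ℝ^D`-valued process `β_j Y_j` (vector weight times scalar process). -/
def bprod {D : ℕ} (β : ℕ → Ω → Fin D → ℝ) (Y : ℕ → Ω → ℝ) (j : ℕ) : Ω → Fin D → ℝ :=
  fun ω d => β j ω d * Y j ω

/-- Convex (Fenchel) conjugate, with values in `EReal`. -/
def econj {D : ℕ} (f : (Fin D → ℝ) → ℝ) (u : Fin D → ℝ) : EReal :=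
  ⨆ z : Fin D → ℝ, ((dotp u z - f z : ℝ) : EReal)

/-- Real-valued version of the convex conjugate (meaningful where the conjugate is finite). -/
def rconj {D : ℕ} (f : (Fin D → ℝ) → ℝ) (u : Fin D → ℝ) : ℝ := (econj f u).toReal

/-- The Doob martingale of an `ℝ^D`-valued process `Z`:
`j ↦ ∑_{i=0}^{j-1} (Z_{i+1} - E_i[Z_{i+1}])`. -/
def doobMart (μ : Measure Ω) (ℱ : Filtration ℕ m0) {D : ℕ} (Z : ℕ → Ω → Fin D → ℝ) :
    ℕ → Ω → Fin D → ℝ :=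
  fun j ω d => ∑ i ∈ Finset.range j, (Z (i + 1) ω d - cexpV μ (ℱ i) (Z (i + 1)) ω d)

/-- Standing assumptions on the data `(F, β, ξ)` of the convex dynamic program:
measurability, adaptedness and convexity of the generator, polynomial growth with an
`L^{∞-}` coefficient, and integrability/adaptedness of the weights and terminal condition. -/
structure Setting (μ : Measure Ω) (ℱ : Filtration ℕ m0) (J D : ℕ)
    (F : ℕ → Ω → (Fin D → ℝ) → ℝ) (β : ℕ → Ω → Fin D → ℝ) (ξ : Ω → ℝ) : Prop where
  F_meas : ∀ j < J, Measurable fun p : Ω × (Fin D → ℝ) => F j p.1 p.2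
  F_adapted : ∀ j < J, ∀ z : Fin D → ℝ, StronglyMeasurable[ℱ j] fun ω => F j ω z
  F_convex : ∀ j < J, ∀ ω, ConvexOn ℝ Set.univ (F j ω)
  F_growth : ∃ q : ℝ, 0 ≤ q ∧ ∃ α : ℕ → Ω → ℝ,
      (∀ j < J, StronglyMeasurable[ℱ j] (α j)) ∧
      (∀ j < J, ∀ᵐ ω ∂μ, 0 ≤ α j ω) ∧ (∀ j < J, MemLinfMinus μ (α j)) ∧
      ∀ j < J, ∀ z : Fin D → ℝ, ∀ᵐ ω ∂μ, |F j ω z| ≤ α j ω * (1 + ‖z‖ ^ q)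
  β_adapted : ∀ j ≤ J, StronglyMeasurable[ℱ j] (β j)
  β_int : ∀ j ≤ J, MemLinfMinus μ (β j)
  ξ_meas : StronglyMeasurable[ℱ J] ξ
  ξ_int : MemLinfMinus μ ξ

/-- `Y` is an adapted `L^{∞-}` solution of the dynamic programming equation
`Y_j = F_j(E_j[β_{j+1} Y_{j+1}])`, `Y_J = ξ`. -/
def IsSolution (μ : Measure Ω) (ℱ : Filtration ℕ m0) (J D : ℕ)
    (F : ℕ → Ω → (Fin D → ℝ) → ℝ) (β : ℕ → Ω → Fin D → ℝ) (ξ : Ω → ℝ)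
    (Y : ℕ → Ω → ℝ) : Prop :=
  (∀ j ≤ J, StronglyMeasurable[ℱ j] (Y j) ∧ MemLinfMinus μ (Y j)) ∧
  (∀ᵐ ω ∂μ, Y J ω = ξ ω) ∧
  (∀ j < J, ∀ᵐ ω ∂μ, Y j ω = F j ω (cexpV μ (ℱ j) (bprod β Y (j + 1)) ω))

/-- Supersolution of the dynamic program. -/
def IsSupersolution (μ : Measure Ω) (ℱ : Filtration ℕ m0) (J D : ℕ)
    (F : ℕ → Ω → (Fin D → ℝ) → ℝ) (β : ℕ → Ω → Fin D → ℝ) (ξ : Ω → ℝ)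
    (Y : ℕ → Ω → ℝ) : Prop :=
  (∀ j ≤ J, StronglyMeasurable[ℱ j] (Y j) ∧ MemLinfMinus μ (Y j)) ∧
  (∀ᵐ ω ∂μ, ξ ω ≤ Y J ω) ∧
  (∀ j < J, ∀ᵐ ω ∂μ, F j ω (cexpV μ (ℱ j) (bprod β Y (j + 1)) ω) ≤ Y j ω)

/-- Subsolution of the dynamic program. -/
def IsSubsolution (μ : Measure Ω) (ℱ : Filtration ℕ m0) (J D : ℕ)
    (F : ℕ → Ω → (Fin D → ℝ) → ℝ) (β : ℕ → Ω → Fin D → ℝ) (ξ : Ω → ℝ)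
    (Y : ℕ → Ω → ℝ) : Prop :=
  (∀ j ≤ J, StronglyMeasurable[ℱ j] (Y j) ∧ MemLinfMinus μ (Y j)) ∧
  (∀ᵐ ω ∂μ, Y J ω ≤ ξ ω) ∧
  (∀ j < J, ∀ᵐ ω ∂μ, Y j ω ≤ F j ω (cexpV μ (ℱ j) (bprod β Y (j + 1)) ω))

/-- The monotonicity assumption: `Y⁽¹⁾ ≥ Y⁽²⁾` a.s. implies
`F_j(β_{j+1} Y⁽¹⁾) ≥ F_j(β_{j+1} Y⁽²⁾)` a.s. -/
def MonoAssumption (μ : Measure Ω) (J D : ℕ)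
    (F : ℕ → Ω → (Fin D → ℝ) → ℝ) (β : ℕ → Ω → Fin D → ℝ) : Prop :=
  ∀ j < J, ∀ Y1 Y2 : Ω → ℝ, MemLinfMinus μ Y1 → MemLinfMinus μ Y2 →
    (∀ᵐ ω ∂μ, Y2 ω ≤ Y1 ω) →
    ∀ᵐ ω ∂μ, F j ω (fun d => β (j + 1) ω d * Y2 ω) ≤ F j ω (fun d => β (j + 1) ω d * Y1 ω)

/-- The class `M_D` of `ℝ^D`-valued `L^{∞-}` martingales. -/
def IsMartD (μ : Measure Ω) (ℱ : Filtration ℕ m0) {D : ℕ}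
    (M : ℕ → Ω → Fin D → ℝ) : Prop :=
  Martingale M ℱ μ ∧ ∀ j, MemLinfMinus μ (M j)

/-- Admissible controls on the time indices `{j₀, ..., J-1}` (the class `A_{j₀}`). -/
def IsAdmissibleFrom (μ : Measure Ω) (ℱ : Filtration ℕ m0) (j₀ J D : ℕ)
    (F : ℕ → Ω → (Fin D → ℝ) → ℝ) (r : ℕ → Ω → Fin D → ℝ) : Prop :=
  ∀ i, j₀ ≤ i → i < J →
    StronglyMeasurable[ℱ i] (r i) ∧ MemLinfMinus μ (r i) ∧
    (∀ᵐ ω ∂μ, econj (F i ω) (r i ω) ≠ ⊤) ∧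
    MemLinfMinus μ (fun ω => rconj (F i ω) (r i ω))

/-- The lower pathwise recursion `θ^{low}(r, M)`:
`θ_J = ξ`, `θ_i = r_i^⊤ (β_{i+1} θ_{i+1}) - r_i^⊤ ΔM_{i+1} - F_i^{#}(r_i)`,
required on the time indices `{j₀, ..., J-1}`. -/
def IsThetaLowFrom (μ : Measure Ω) (j₀ J D : ℕ)
    (F : ℕ → Ω → (Fin D → ℝ) → ℝ) (β : ℕ → Ω → Fin D → ℝ) (ξ : Ω → ℝ)
    (r M : ℕ → Ω → Fin D → ℝ) (θ : ℕ → Ω → ℝ) : Prop :=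
  (∀ᵐ ω ∂μ, θ J ω = ξ ω) ∧
  ∀ i, j₀ ≤ i → i < J → ∀ᵐ ω ∂μ,
    θ i ω = dotp (r i ω) (fun d => β (i + 1) ω d * θ (i + 1) ω)
      - dotp (r i ω) (fun d => M (i + 1) ω d - M i ω d) - rconj (F i ω) (r i ω)

/-- The upper pathwise recursion `θ^{up}(M)`:
`θ_J = ξ`, `θ_j = F_j(β_{j+1} θ_{j+1} - ΔM_{j+1})`. -/
def IsThetaUp (μ : Measure Ω) (J D : ℕ)
    (F : ℕ → Ω → (Fin D → ℝ) → ℝ) (β : ℕ → Ω → Fin D → ℝ) (ξ : Ω → ℝ)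
    (M : ℕ → Ω → Fin D → ℝ) (θ : ℕ → Ω → ℝ) : Prop :=
  (∀ᵐ ω ∂μ, θ J ω = ξ ω) ∧
  ∀ j < J, ∀ᵐ ω ∂μ,
    θ j ω = F j ω (fun d => β (j + 1) ω d * θ (j + 1) ω - (M (j + 1) ω d - M j ω d))

/-- The optimality condition `r_i^⊤ E_i[β_{i+1} Y_{i+1}] - F_i^{#}(r_i) = F_i(E_i[β_{i+1} Y_{i+1}])`
on the time indices `{j₀, ..., J-1}`. -/
def OptimalityCond (μ : Measure Ω) (ℱ : Filtration ℕ m0) (j₀ J D : ℕ)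
    (F : ℕ → Ω → (Fin D → ℝ) → ℝ) (β : ℕ → Ω → Fin D → ℝ)
    (Y : ℕ → Ω → ℝ) (r : ℕ → Ω → Fin D → ℝ) : Prop :=
  ∀ i, j₀ ≤ i → i < J → ∀ᵐ ω ∂μ,
    dotp (r i ω) (cexpV μ (ℱ i) (bprod β Y (i + 1)) ω) - rconj (F i ω) (r i ω)
      = F i ω (cexpV μ (ℱ i) (bprod β Y (i + 1)) ω)


/-!
The proof is a downward induction on `j`. The improved time satisfies `τ̄_j = j` on the
`ℱ_j`-event `R_j = {S_j ≥ E_j[S_{τ_l}] for l = j+1, …, min(j+κ, J)}` and `τ̄_j = τ̄_{j+1}` off it,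
so `E_j[S_{τ̄_j}]` equals `S_j` on `R_j` and `E_j[S_{τ̄_{j+1}}]` off it. By the tower property the
induction hypothesis bounds `E_j[S_{τ_l}]` by `E_j[S_{τ̄_{j+1}}]` for `j < l ≤ min(j+κ, J)`, and on
`R_j` the bound by `S_j` is the definition of `R_j`. Off `R_j` some window value exceeds `S_j`,
hence `S_j ≤ E_j[S_{τ̄_j}]` everywhere. This settles `l = j`: by consistency `E_j[S_{τ_j}]` is `S_j`
on `{τ_j = j}` and `E_j[S_{τ_{j+1}}]` elsewhere, and `κ ≥ 1` puts `j + 1` in the window.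
-/

/-- `stoppedValue` for `ℕ`-valued random times, in the form used by the statement. -/
def stoppedAt {β : Type*} (S : ℕ → Ω → β) (σ : Ω → ℕ) : Ω → β := fun ω => S (σ ω) ω

theorem stoppedAt_piecewise_const {β : Type*} (S : ℕ → Ω → β) (s : Set Ω)
    [DecidablePred (· ∈ s)] (j : ℕ) (σ : Ω → ℕ) :
    stoppedAt S (s.piecewise (fun _ => j) σ) = s.piecewise (S j) (stoppedAt S σ) := by
  ext ω
  by_cases h : ω ∈ s <;> simp [stoppedAt, h]

theorem integrable_of_eq_piecewise_succ {E : Type*} [NormedAddCommGroup E] {μ : Measure Ω}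
    {X S : ℕ → Ω → E} {s : ℕ → Set Ω} [∀ j, DecidablePred (· ∈ s j)] {J : ℕ}
    (hXJ : Integrable (X J) μ) (hS : ∀ j < J, Integrable (S j) μ)
    (hs : ∀ j < J, MeasurableSet (s j))
    (hX : ∀ j < J, X j = (s j).piecewise (S j) (X (j + 1))) {j : ℕ} (hj : j ≤ J) :
    Integrable (X j) μ := by
  induction hj using Nat.decreasingInduction with
  | self => exact hXJ
  | of_succ j hj ih =>
    rw [hX j hj]
    exact Integrable.piecewise (hs j hj) (hS j hj).integrableOn ih.integrableOn

theorem MeasureTheory.condExp_piecewise {E : Type*} [NormedAddCommGroup E] [NormedSpace ℝ E]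
    [CompleteSpace E] {μ : Measure Ω} {m : MeasurableSpace Ω} {s : Set Ω}
    [DecidablePred (· ∈ s)] {f g : Ω → E} (hm : m ≤ m0) (hs : MeasurableSet[m] s)
    (hf : Integrable f μ) (hg : Integrable g μ) :
    μ[s.piecewise f g|m] =ᵐ[μ] s.piecewise (μ[f|m]) (μ[g|m]) := by
  rw [← Set.indicator_add_compl_eq_piecewise, ← Set.indicator_add_compl_eq_piecewise]
  exact (condExp_add (hf.indicator (hm s hs)) (hg.indicator (hm s hs).compl) m).trans
    ((condExp_indicator hf hs).add (condExp_indicator hg hs.compl))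

theorem MeasureTheory.condExp_le_condExp_of_condExp_le {μ : Measure Ω}
    {m₁ m₂ : MeasurableSpace Ω} {f g : Ω → ℝ} (hm₁₂ : m₁ ≤ m₂) (hm₂ : m₂ ≤ m0)
    [SigmaFinite (μ.trim hm₂)]
    (h : μ[f|m₂] ≤ᵐ[μ] μ[g|m₂]) : μ[f|m₁] ≤ᵐ[μ] μ[g|m₁] :=
  calc μ[f|m₁] =ᵐ[μ] μ[μ[f|m₂]|m₁] := (condExp_condExp_of_le hm₁₂ hm₂).symm
    _ ≤ᵐ[μ] μ[μ[g|m₂]|m₁] := condExp_mono integrable_condExp integrable_condExp h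
    _ =ᵐ[μ] μ[g|m₁] := condExp_condExp_of_le hm₁₂ hm₂

theorem condExp_stoppedAt_of_eq_piecewise {μ : Measure Ω} {m : MeasurableSpace Ω}
    {S : ℕ → Ω → ℝ} {s : Set Ω} [DecidablePred (· ∈ s)] {j : ℕ} {σ σ' : Ω → ℕ}
    (hm : m ≤ m0) [SigmaFinite (μ.trim hm)] (hs : MeasurableSet[m] s)
    (hSm : StronglyMeasurable[m] (S j)) (hSi : Integrable (S j) μ)
    (hσ : Integrable (stoppedAt S σ) μ) (hσ' : σ' = s.piecewise (fun _ => j) σ) :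
    μ[stoppedAt S σ'|m] =ᵐ[μ] s.piecewise (S j) (μ[stoppedAt S σ|m]) := by
  rw [hσ', stoppedAt_piecewise_const]
  simpa only [condExp_of_stronglyMeasurable hm hSm hSi] using condExp_piecewise hm hs hSi hσ

/-- The first `i ≥ j` with `ω ∈ R i`; it is `sInf ∅ = 0` if there is none. -/
def firstEntryFrom (R : ℕ → Set Ω) (j : ℕ) (ω : Ω) : ℕ := sInf {i | j ≤ i ∧ ω ∈ R i}

section FirstEntry

variable {R : ℕ → Set Ω} {j : ℕ} {ω : Ω}

theorem firstEntryFrom_of_mem (h : ω ∈ R j) : firstEntryFrom R j ω = j :=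
  le_antisymm (Nat.sInf_le ⟨le_rfl, h⟩)
    (Nat.sInf_mem (s := {i | j ≤ i ∧ ω ∈ R i}) ⟨j, le_rfl, h⟩).1

theorem firstEntryFrom_of_notMem (h : ω ∉ R j) :
    firstEntryFrom R j ω = firstEntryFrom R (j + 1) ω := by
  unfold firstEntryFrom
  congr 1
  ext i
  refine ⟨fun ⟨hji, hi⟩ => ⟨lt_of_le_of_ne hji ?_, hi⟩, fun ⟨hji, hi⟩ => ⟨by omega, hi⟩⟩
  rintro rfl
  exact h hi

theorem firstEntryFrom_eq_piecewise [DecidablePred (· ∈ R j)] :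
    firstEntryFrom R j = (R j).piecewise (fun _ => j) (firstEntryFrom R (j + 1)) := by
  ext ω
  by_cases h : ω ∈ R j
  · rw [Set.piecewise_eq_of_mem _ _ _ h, firstEntryFrom_of_mem h]
  · rw [Set.piecewise_eq_of_notMem _ _ _ h, firstEntryFrom_of_notMem h]

theorem integrable_stoppedAt_firstEntryFrom {μ : Measure Ω} {S : ℕ → Ω → ℝ} {J : ℕ}
    (hR : ∀ i < J, MeasurableSet (R i)) (hRJ : ∀ ω, ω ∈ R J)
    (hS : ∀ i ≤ J, Integrable (S i) μ) (hj : j ≤ J) :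
    Integrable (stoppedAt S (firstEntryFrom R j)) μ := by
  classical
  refine integrable_of_eq_piecewise_succ (X := fun i => stoppedAt S (firstEntryFrom R i)) ?_
    (fun i hi => hS i hi.le) hR
    (fun i _ => by rw [firstEntryFrom_eq_piecewise, stoppedAt_piecewise_const]) hj
  rw [show firstEntryFrom R J = fun _ => J from funext fun ω => firstEntryFrom_of_mem (hRJ ω)]
  exact hS J le_rfl

end FirstEntry

structure IsConsistentFamily (ℱ : Filtration ℕ m0) (J : ℕ) (τ : ℕ → Ω → ℕ) : Prop where
  isStoppingTime : ∀ l ≤ J, IsStoppingTime ℱ (fun ω => (τ l ω : WithTop ℕ))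
  le_apply : ∀ l ≤ J, ∀ ω, l ≤ τ l ω
  apply_le : ∀ l ≤ J, ∀ ω, τ l ω ≤ J
  eq_succ_of_lt : ∀ l < J, ∀ ω, l < τ l ω → τ l ω = τ (l + 1) ω

namespace IsConsistentFamily

variable {ℱ : Filtration ℕ m0} {J : ℕ} {τ : ℕ → Ω → ℕ}

theorem eq_const_horizon (hτ : IsConsistentFamily ℱ J τ) : τ J = fun _ => J :=
  funext fun ω => le_antisymm (hτ.apply_le J le_rfl ω) (hτ.le_apply J le_rfl ω)

theorem eq_piecewise (hτ : IsConsistentFamily ℱ J τ) {l : ℕ} (hl : l < J) :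
    τ l = {ω | τ l ω = l}.piecewise (fun _ => l) (τ (l + 1)) := by
  ext ω
  by_cases h : τ l ω = l
  · rw [Set.piecewise_eq_of_mem {ω | τ l ω = l} _ _ h, h]
  · rw [Set.piecewise_eq_of_notMem {ω | τ l ω = l} _ _ h]
    exact hτ.eq_succ_of_lt l hl ω ((hτ.le_apply l hl.le ω).lt_of_ne' h)

theorem measurableSet_eq_self (hτ : IsConsistentFamily ℱ J τ) {l : ℕ} (hl : l ≤ J) :
    MeasurableSet[ℱ l] {ω | τ l ω = l} := by
  simpa using (hτ.isStoppingTime l hl).measurableSet_eq l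

theorem integrable_stoppedAt {μ : Measure Ω} {S : ℕ → Ω → ℝ} (hτ : IsConsistentFamily ℱ J τ)
    (hS : ∀ i ≤ J, Integrable (S i) μ) {l : ℕ} (hl : l ≤ J) :
    Integrable (stoppedAt S (τ l)) μ := by
  refine integrable_of_eq_piecewise_succ (X := fun i => stoppedAt S (τ i)) ?_
    (fun i hi => hS i hi.le) (fun i hi => ℱ.le i _ (hτ.measurableSet_eq_self hi.le))
    (fun i hi => by rw [← stoppedAt_piecewise_const, ← hτ.eq_piecewise hi]) hl
  rw [hτ.eq_const_horizon]
  exact hS J le_rfl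

end IsConsistentFamily

def stopRegion (μ : Measure Ω) (ℱ : Filtration ℕ m0) (J κ : ℕ) (S : ℕ → Ω → ℝ)
    (τ : ℕ → Ω → ℕ) (i : ℕ) : Set Ω :=
  {ω | ∀ l, i + 1 ≤ l → l ≤ min (i + κ) J → μ[stoppedAt S (τ l)|ℱ i] ω ≤ S i ω}

section Improvement

variable {μ : Measure Ω} {ℱ : Filtration ℕ m0} {J κ : ℕ} {S : ℕ → Ω → ℝ} {τ : ℕ → Ω → ℕ}

theorem measurableSet_stopRegion {i : ℕ} (hS : StronglyMeasurable[ℱ i] (S i)) :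
    MeasurableSet[ℱ i] (stopRegion μ ℱ J κ S τ i) := by
  simp only [stopRegion, Set.ofPred_forall]
  exact .iInter fun l => .iInter fun _ => .iInter fun _ =>
    measurableSet_le stronglyMeasurable_condExp.measurable hS.measurable

theorem mem_stopRegion_horizon (ω : Ω) : ω ∈ stopRegion μ ℱ J κ S τ J :=
  fun l h₁ h₂ => absurd h₂ (by omega)

theorem firstEntryFrom_stopRegion_horizon :
    firstEntryFrom (stopRegion μ ℱ J κ S τ) J = fun _ => J :=
  funext fun ω => firstEntryFrom_of_mem (mem_stopRegion_horizon ω)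

theorem integrable_stoppedAt_improved (hS : ∀ j ≤ J, StronglyMeasurable[ℱ j] (S j))
    (hSi : ∀ j ≤ J, Integrable (S j) μ) {j : ℕ} (hj : j ≤ J) :
    Integrable (stoppedAt S (firstEntryFrom (stopRegion μ ℱ J κ S τ) j)) μ :=
  integrable_stoppedAt_firstEntryFrom
    (fun i hi => ℱ.le i _ (measurableSet_stopRegion (hS i hi.le))) mem_stopRegion_horizon hSi hj

theorem ae_le_condExp_improved_of_succ [SigmaFiniteFiltration μ ℱ]
    (hS : ∀ j ≤ J, StronglyMeasurable[ℱ j] (S j)) (hSi : ∀ j ≤ J, Integrable (S j) μ)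
    {j : ℕ} (hj : j < J)
    (ih : ∀ l, j + 1 ≤ l → l ≤ min (j + 1 + κ) J →
      μ[stoppedAt S (τ l)|ℱ (j + 1)]
        ≤ᵐ[μ] μ[stoppedAt S (firstEntryFrom (stopRegion μ ℱ J κ S τ) (j + 1))|ℱ (j + 1)]) :
    ∀ᵐ ω ∂μ, S j ω ≤ μ[stoppedAt S (firstEntryFrom (stopRegion μ ℱ J κ S τ) j)|ℱ j] ω ∧
      ∀ l, j + 1 ≤ l → l ≤ min (j + κ) J → μ[stoppedAt S (τ l)|ℱ j] ω
        ≤ μ[stoppedAt S (firstEntryFrom (stopRegion μ ℱ J κ S τ) j)|ℱ j] ω := by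
  classical
  set R := stopRegion μ ℱ J κ S τ
  have hcont : ∀ᵐ ω ∂μ, ∀ l, j + 1 ≤ l → l ≤ min (j + κ) J →
      μ[stoppedAt S (τ l)|ℱ j] ω ≤ μ[stoppedAt S (firstEntryFrom R (j + 1))|ℱ j] ω :=
    ae_all_iff.2 fun l => Filter.eventually_imp_distrib_left.2 fun h₁ =>
      Filter.eventually_imp_distrib_left.2 fun h₂ =>
        condExp_le_condExp_of_condExp_le (ℱ.mono j.le_succ) (ℱ.le _) (ih l h₁ (by omega))
  have hbar : μ[stoppedAt S (firstEntryFrom R j)|ℱ j]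
      =ᵐ[μ] (R j).piecewise (S j) (μ[stoppedAt S (firstEntryFrom R (j + 1))|ℱ j]) :=
    condExp_stoppedAt_of_eq_piecewise (ℱ.le j) (measurableSet_stopRegion (hS j hj.le))
      (hS j hj.le) (hSi j hj.le) (integrable_stoppedAt_improved hS hSi hj)
      firstEntryFrom_eq_piecewise
  filter_upwards [hcont, hbar] with ω hcontω hbarω
  rw [hbarω]
  by_cases hωR : ω ∈ R j
  · rw [Set.piecewise_eq_of_mem _ _ _ hωR]
    exact ⟨le_rfl, hωR⟩
  · rw [Set.piecewise_eq_of_notMem _ _ _ hωR]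
    refine ⟨?_, hcontω⟩
    have hωR' : ¬ ∀ l, j + 1 ≤ l → l ≤ min (j + κ) J →
        μ[stoppedAt S (τ l)|ℱ j] ω ≤ S j ω := hωR
    push Not at hωR'
    obtain ⟨l, h₁, h₂, hlt⟩ := hωR'
    exact hlt.le.trans (hcontω l h₁ h₂)

theorem condExp_stoppedAt_le_improved_of_succ [SigmaFiniteFiltration μ ℱ]
    (hS : ∀ j ≤ J, StronglyMeasurable[ℱ j] (S j)) (hSi : ∀ j ≤ J, Integrable (S j) μ)
    (hτ : IsConsistentFamily ℱ J τ) (hκ : 1 ≤ κ) {j : ℕ} (hj : j < J)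
    (ih : ∀ l, j + 1 ≤ l → l ≤ min (j + 1 + κ) J →
      μ[stoppedAt S (τ l)|ℱ (j + 1)]
        ≤ᵐ[μ] μ[stoppedAt S (firstEntryFrom (stopRegion μ ℱ J κ S τ) (j + 1))|ℱ (j + 1)]) :
    ∀ l, j ≤ l → l ≤ min (j + κ) J →
      μ[stoppedAt S (τ l)|ℱ j]
        ≤ᵐ[μ] μ[stoppedAt S (firstEntryFrom (stopRegion μ ℱ J κ S τ) j)|ℱ j] := by
  have hle := ae_le_condExp_improved_of_succ hS hSi hj ih
  intro l hl₁ hl₂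
  rcases hl₁.eq_or_lt with rfl | hlt
  · have hτj : μ[stoppedAt S (τ j)|ℱ j]
        =ᵐ[μ] {ω | τ j ω = j}.piecewise (S j) (μ[stoppedAt S (τ (j + 1))|ℱ j]) :=
      condExp_stoppedAt_of_eq_piecewise (ℱ.le j) (hτ.measurableSet_eq_self hj.le)
        (hS j hj.le) (hSi j hj.le) (hτ.integrable_stoppedAt hSi hj) (hτ.eq_piecewise hj)
    filter_upwards [hτj, hle] with ω hτω ⟨hnow, hwin⟩
    rw [hτω]
    by_cases hωτ : τ j ω = j
    · rw [Set.piecewise_eq_of_mem {ω | τ j ω = j} _ _ hωτ]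
      exact hnow
    · rw [Set.piecewise_eq_of_notMem {ω | τ j ω = j} _ _ hωτ]
      exact hwin (j + 1) le_rfl (by omega)
  · filter_upwards [hle] with ω hω using hω.2 l hlt (by omega)

theorem condExp_stoppedAt_le_improved [SigmaFiniteFiltration μ ℱ]
    (hS : ∀ j ≤ J, StronglyMeasurable[ℱ j] (S j)) (hSi : ∀ j ≤ J, Integrable (S j) μ)
    (hτ : IsConsistentFamily ℱ J τ) (hκ : 1 ≤ κ) {j : ℕ} (hj : j ≤ J) :
    ∀ l, j ≤ l → l ≤ min (j + κ) J →
      μ[stoppedAt S (τ l)|ℱ j]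
        ≤ᵐ[μ] μ[stoppedAt S (firstEntryFrom (stopRegion μ ℱ J κ S τ) j)|ℱ j] := by
  induction hj using Nat.decreasingInduction with
  | self =>
    intro l hl₁ hl₂
    obtain rfl : l = J := by omega
    rw [hτ.eq_const_horizon, firstEntryFrom_stopRegion_horizon]
  | of_succ j hj ih => exact condExp_stoppedAt_le_improved_of_succ hS hSi hτ hκ hj ih

end Improvement

/-- Policy improvement for optimal stopping: let `S` be adapted with
`S_j ∈ L^p` for all `p ≥ 1`, let `(τ_l)_{l=0,…,J}` be a consistent family of `{0,…,J}`-valued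
stopping times (`τ_l ≥ l`, and `τ_l > l ⟹ τ_l = τ_{l+1}`), fix a window `κ ≥ 1` and define
`τ̄_j = inf{ i ≥ j : S_i ≥ max_{l=i+1,…,min(i+κ,J)} E_i[S_{τ_l}] }`. Then for every
`j = 0,…,J`, `E_j[S_{τ̄_j}] ≥ max_{l=j,…,min(j+κ,J)} E_j[S_{τ_l}]` `P`-a.s. -/
theorem stopping_policy_improvement
    (μ : Measure Ω) [IsProbabilityMeasure μ] (ℱ : Filtration ℕ m0) (J : ℕ)
    (S : ℕ → Ω → ℝ)
    (hS_adapted : ∀ j ≤ J, StronglyMeasurable[ℱ j] (S j))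
    (hS_int : ∀ j ≤ J, MemLinfMinus μ (S j))
    (τ : ℕ → Ω → ℕ)
    (hτ_stop : ∀ l ≤ J, IsStoppingTime ℱ (fun ω => (τ l ω : WithTop ℕ)))
    (hτ_ge : ∀ l ≤ J, ∀ ω, l ≤ τ l ω)
    (hτ_le : ∀ l ≤ J, ∀ ω, τ l ω ≤ J)
    (hτ_cons : ∀ l < J, ∀ ω, l < τ l ω → τ l ω = τ (l + 1) ω)
    (κ : ℕ) (hκ : 1 ≤ κ)
    (τbar : ℕ → Ω → ℕ)
    (hτbar : ∀ j ω, τbar j ω =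
      sInf {i | j ≤ i ∧ ∀ l, i + 1 ≤ l → l ≤ min (i + κ) J →
        (μ[fun ω' => S (τ l ω') ω'|ℱ i]) ω ≤ S i ω}) :
    ∀ j ≤ J, ∀ l, j ≤ l → l ≤ min (j + κ) J →
      ∀ᵐ ω ∂μ, (μ[fun ω' => S (τ l ω') ω'|ℱ j]) ω
        ≤ (μ[fun ω' => S (τbar j ω') ω'|ℱ j]) ω := by
  have hτ : IsConsistentFamily ℱ J τ := ⟨hτ_stop, hτ_ge, hτ_le, hτ_cons⟩
  have hS_int₁ : ∀ j ≤ J, Integrable (S j) μ := fun j hj =>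
    memLp_one_iff_integrable.1 (hS_int j hj 1 le_rfl ENNReal.one_ne_top)
  obtain rfl : τbar = firstEntryFrom (stopRegion μ ℱ J κ S τ) := funext₂ hτbar
  intro j hj l hl₁ hl₂
  exact condExp_stoppedAt_le_improved hS_adapted hS_int₁ hτ hκ hj l hl₁ hl₂

end
end

section
/- Integrability of the upper pathwise recursion: for any martingale M ∈ M_D, the process θ^{up}(M) defined backward by θ^{up}_J = ξ and θ^{up}_j = F_j(β_{j+1} θ^{up}_{j+1} − (M_{j+1} − M_j)) satisfies θ^{up}_j ∈ L^{∞-}(ℝ) for every j = 0,...,J. -/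
open MeasureTheory
open scoped ENNReal

noncomputable section

variable {Ω : Type*} {m0 : MeasurableSpace Ω}

/-!
Backward induction on `j`. If `θ_{j+1} ∈ L^{∞-}`, then so is `z = β_{j+1} θ_{j+1} - ΔM_{j+1}`
(Hölder), and `|θ_j| = |F_j(z)| ≤ α_j (1 + |z|^q)` lies in `L^{∞-}` again. The growth bound is
only assumed for deterministic `z`, outside a null set depending on `z`; it transfers to the
random argument because the convex functions `F_j(ω, ·)` are continuous, so a countable dense
set of `z` suffices.
-/

lemma ENNReal.holderTriple_two_mul (p : ℝ≥0∞) : ENNReal.HolderTriple (2 * p) (2 * p) p :=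
  ⟨by rw [ENNReal.mul_inv (by simp) (by simp), ← add_mul, ENNReal.inv_two_add_inv_two, one_mul]⟩

lemma ae_forall_of_isClosed {μ : Measure Ω} {X : Type*} [TopologicalSpace X]
    [TopologicalSpace.SeparableSpace X] {P : Ω → X → Prop}
    (hP : ∀ ω, IsClosed {x | P ω x}) (h : ∀ x, ∀ᵐ ω ∂μ, P ω x) : ∀ᵐ ω ∂μ, ∀ x, P ω x := by
  obtain ⟨s, hs, hsd⟩ := TopologicalSpace.exists_countable_dense X
  filter_upwards [(ae_ball_iff hs).2 fun x _ => h x] with ω hω x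
  exact hsd.induction hω (hP ω) x

namespace MemLinfMinus

variable {μ : Measure Ω} {E : Type*} [NormedAddCommGroup E] {f g : Ω → E}

lemma memLp [IsFiniteMeasure μ] (hf : MemLinfMinus μ f) {p : ℝ≥0∞} (hp : p ≠ ∞) :
    MemLp f p μ :=
  (hf (max 1 p) (le_max_left _ _) (max_ne_top ENNReal.one_ne_top hp)).mono_exponent
    (le_max_right _ _)

lemma aestronglyMeasurable (hf : MemLinfMinus μ f) : AEStronglyMeasurable f μ :=
  (hf 1 le_rfl ENNReal.one_ne_top).1

lemma ae_eq (hf : MemLinfMinus μ f) (hfg : f =ᵐ[μ] g) : MemLinfMinus μ g :=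
  fun p hp hp' => (hf p hp hp').ae_eq hfg

lemma const [IsFiniteMeasure μ] (c : E) : MemLinfMinus μ fun _ => c :=
  fun _ _ _ => memLp_const c

lemma add (hf : MemLinfMinus μ f) (hg : MemLinfMinus μ g) : MemLinfMinus μ (f + g) :=
  fun p hp hp' => (hf p hp hp').add (hg p hp hp')

lemma sub (hf : MemLinfMinus μ f) (hg : MemLinfMinus μ g) : MemLinfMinus μ (f - g) :=
  fun p hp hp' => (hf p hp hp').sub (hg p hp hp')

lemma smul [IsFiniteMeasure μ] [NormedSpace ℝ E] {φ : Ω → ℝ} (hφ : MemLinfMinus μ φ)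
    (hf : MemLinfMinus μ f) : MemLinfMinus μ (φ • f) := by
  intro p _ hp
  have := ENNReal.holderTriple_two_mul p
  have h2p : 2 * p ≠ ∞ := ENNReal.mul_ne_top ENNReal.ofNat_ne_top hp
  exact (hf.memLp h2p).smul (hφ.memLp h2p)

lemma norm_rpow [IsFiniteMeasure μ] (hf : MemLinfMinus μ f) {q : ℝ} (hq : 0 ≤ q) :
    MemLinfMinus μ fun ω => ‖f ω‖ ^ q := by
  rcases hq.eq_or_lt with rfl | hq_pos
  · simpa only [Real.rpow_zero] using const (μ := μ) (1 : ℝ)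
  intro p _ hp
  have hq₀ : ENNReal.ofReal q ≠ 0 := (ENNReal.ofReal_pos.2 hq_pos).ne'
  have := (hf.memLp (ENNReal.mul_ne_top hp (ENNReal.ofReal_ne_top (r := q)))).norm_rpow_div
    (ENNReal.ofReal q)
  rwa [ENNReal.mul_div_cancel_right hq₀ ENNReal.ofReal_ne_top,
    ENNReal.toReal_ofReal hq] at this

end MemLinfMinus

lemma memLinfMinus_comp_of_growth {μ : Measure Ω} [IsFiniteMeasure μ] {E : Type*} [NormedAddCommGroup E]
    [MeasurableSpace E] [BorelSpace E] [TopologicalSpace.SeparableSpace E] {G : Ω → E → ℝ}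
    (hG_meas : Measurable fun p : Ω × E => G p.1 p.2) (hG_cont : ∀ ω, Continuous (G ω))
    {α : Ω → ℝ} (hα : MemLinfMinus μ α) {q : ℝ} (hq : 0 ≤ q)
    (hG_growth : ∀ x, ∀ᵐ ω ∂μ, |G ω x| ≤ α ω * (1 + ‖x‖ ^ q))
    {z : Ω → E} (hz : MemLinfMinus μ z) : MemLinfMinus μ fun ω => G ω (z ω) := by
  have hbound : ∀ᵐ ω ∂μ, ∀ x, |G ω x| ≤ α ω * (1 + ‖x‖ ^ q) :=
    ae_forall_of_isClosed (fun ω => isClosed_le (hG_cont ω).abs <| continuous_const.mul <|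
      continuous_const.add <| continuous_norm.rpow_const fun _ => .inr hq) hG_growth
  have hmeas : AEStronglyMeasurable (fun ω => G ω (z ω)) μ :=
    (hG_meas.comp_aemeasurable
      (aemeasurable_id.prodMk hz.aestronglyMeasurable.aemeasurable)).aestronglyMeasurable
  have hdom : MemLinfMinus μ fun ω => α ω * (1 + ‖z ω‖ ^ q) :=
    hα.smul ((MemLinfMinus.const 1).add (hz.norm_rpow hq))
  intro p hp hp'
  refine (hdom p hp hp').of_le hmeas ?_
  filter_upwards [hbound] with ω hω
  simpa only [Real.norm_eq_abs] using (hω (z ω)).trans (le_abs_self _)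

/-- integrability of the upper pathwise recursion: for any martingale `M ∈ M_D`,
the process `θ^{up}(M)` defined backward by `θ_J = ξ`,
`θ_j = F_j(β_{j+1} θ_{j+1} − ΔM_{j+1})` is in `L^{∞-}` at every time `j = 0,…,J`. -/
theorem thetaUp_memLinfMinus
    (μ : Measure Ω) [IsProbabilityMeasure μ] (ℱ : Filtration ℕ m0)
    (J D : ℕ) (F : ℕ → Ω → (Fin D → ℝ) → ℝ) (β : ℕ → Ω → Fin D → ℝ) (ξ : Ω → ℝ)
    (hset : Setting μ ℱ J D F β ξ)
    (M : ℕ → Ω → Fin D → ℝ) (hM : IsMartD μ ℱ M)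
    (θ : ℕ → Ω → ℝ) (hθ : IsThetaUp μ J D F β ξ M θ) :
    ∀ j ≤ J, MemLinfMinus μ (θ j) := by
  obtain ⟨q, hq, α, -, -, hα, hgrowth⟩ := hset.F_growth
  intro j hj
  induction hj using Nat.decreasingInduction with
  | self => exact hset.ξ_int.ae_eq (Filter.EventuallyEq.symm hθ.1)
  | of_succ j hjJ hθ_succ =>
    have hz : MemLinfMinus μ fun ω d =>
        β (j + 1) ω d * θ (j + 1) ω - (M (j + 1) ω d - M j ω d) :=
      ((hθ_succ.smul (hset.β_int (j + 1) hjJ)).sub ((hM.2 (j + 1)).sub (hM.2 j))).ae_eq <|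
        .of_forall fun ω => by ext d; simp [mul_comm]
    have hF_cont : ∀ ω, Continuous (F j ω) := fun ω =>
      (hset.F_convex j hjJ ω).locallyLipschitz.continuous
    exact (memLinfMinus_comp_of_growth (hset.F_meas j hjJ) hF_cont (hα j hjJ) hq
      (hgrowth j hjJ) hz).ae_eq (Filter.EventuallyEq.symm (hθ.2 j hjJ))

end
end
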